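/- The greedy algorithm for maximum coverage achieves an approximation ratio of 1 − (1 − 1/k)^k ≥ 1 − 1/e: given a finite collection of finite sets and a budget k, iteratively selecting the set covering the most uncovered elements covers at least (1 − (1−1/k)^k) times the number of elements covered by an optimal choice of k sets. -/

import Mathlib

/-!
Let `c n` be the number of elements covered by the first `n` greedy sets and `opt` the size of
an optimal cover by `k` sets. The `k` optimal sets together cover at least `opt - c n` elements
not yet covered, so one of them, and hence the greedy choice, covers at least `(opt - c n) / k`
new ones. Thus the deficit `opt - c n` shrinks by a factor `1 - 1/k` at every step, and after
`k` steps it is at most `(1 - 1/k)^k * opt ≤ opt / e`.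
-/

open Finset

theorem card_biUnion_le_card_add_card_mul {ι α : Type*} [DecidableEq α] (C : Finset α)
    (s : Finset ι) (T : ι → Finset α) (m : ℕ) (h : ∀ i ∈ s, #(T i \ C) ≤ m) :
    #(s.biUnion T) ≤ #C + #s * m := by
  have hsub : s.biUnion T ⊆ C ∪ s.biUnion fun i => T i \ C := by
    intro x hx
    by_cases hxC : x ∈ C
    · exact mem_union_left _ hxC
    · obtain ⟨i, hi, hxT⟩ := mem_biUnion.mp hx
      exact mem_union_right _ (mem_biUnion.mpr ⟨i, hi, mem_sdiff.mpr ⟨hxT, hxC⟩⟩)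
  calc #(s.biUnion T) ≤ #(C ∪ s.biUnion fun i => T i \ C) := card_le_card hsub
    _ ≤ #C + #(s.biUnion fun i => T i \ C) := card_union_le _ _
    _ ≤ #C + #s * m := Nat.add_le_add_left (card_biUnion_le_card_mul s _ m h) _

theorem sub_add_le_one_sub_div_mul {opt c g k : ℝ} (hk : 0 < k) (h : opt ≤ c + k * g) :
    opt - (c + g) ≤ (1 - 1 / k) * (opt - c) := by
  have hg : (opt - c) / k ≤ g := by
    rw [div_le_iff₀ hk]
    linarith
  calc opt - (c + g) ≤ (opt - c) - (opt - c) / k := by linarith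
    _ = (1 - 1 / k) * (opt - c) := by ring

namespace MaxCoverage

variable {α : Type*} [DecidableEq α] {k : ℕ}

def coveredBy (S : Fin k → Finset α) (n : ℕ) : Finset α :=
  (univ.filter fun i : Fin k => (i : ℕ) < n).biUnion S

def IsGreedy (F : Finset (Finset α)) (S : Fin k → Finset α) : Prop :=
  ∀ j : Fin k, ∀ T ∈ F, #(T \ coveredBy S j) ≤ #(S j \ coveredBy S j)

variable (S : Fin k → Finset α)

theorem coveredBy_zero : coveredBy S 0 = ∅ := by
  simp [coveredBy]

theorem coveredBy_self : coveredBy S k = univ.biUnion S := by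
  simp [coveredBy]

theorem coveredBy_val (j : Fin k) :
    coveredBy S j = (univ.filter fun i : Fin k => i < j).biUnion S := by
  simp only [coveredBy, Fin.val_fin_lt]

theorem coveredBy_succ {n : ℕ} (hn : n < k) :
    coveredBy S (n + 1) = coveredBy S n ∪ S ⟨n, hn⟩ := by
  ext x
  simp only [coveredBy, mem_biUnion, mem_filter, mem_univ, true_and, mem_union]
  constructor
  · rintro ⟨i, hi, hx⟩
    rcases Nat.lt_succ_iff_lt_or_eq.mp hi with hlt | heq
    · exact Or.inl ⟨i, hlt, hx⟩
    · exact Or.inr ((Fin.ext heq : i = ⟨n, hn⟩) ▸ hx)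
  · rintro (⟨i, hi, hx⟩ | hx)
    · exact ⟨i, Nat.lt_succ_of_lt hi, hx⟩
    · exact ⟨⟨n, hn⟩, Nat.lt_succ_self n, hx⟩

theorem card_coveredBy_succ {n : ℕ} (hn : n < k) :
    #(coveredBy S (n + 1)) = #(coveredBy S n) + #(S ⟨n, hn⟩ \ coveredBy S n) := by
  rw [coveredBy_succ S hn, union_comm, ← card_sdiff_add_card, Nat.add_comm]

variable {F : Finset (Finset α)} {S}

theorem IsGreedy.deficit_succ_le (hS : IsGreedy F S) {T : Fin k → Finset α} (hT : ∀ j, T j ∈ F)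
    {n : ℕ} (hn : n < k) :
    (#(univ.biUnion T) : ℝ) - #(coveredBy S (n + 1)) ≤
      (1 - 1 / (k : ℝ)) * (#(univ.biUnion T) - #(coveredBy S n)) := by
  have hopt : #(univ.biUnion T) ≤ #(coveredBy S n) + k * #(S ⟨n, hn⟩ \ coveredBy S n) := by
    simpa using card_biUnion_le_card_add_card_mul (coveredBy S n) univ T _
      fun i _ => hS ⟨n, hn⟩ (T i) (hT i)
  rw [card_coveredBy_succ S hn, Nat.cast_add]
  exact sub_add_le_one_sub_div_mul (by exact_mod_cast Nat.zero_lt_of_lt hn)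
    (by exact_mod_cast hopt)

theorem IsGreedy.approx (hS : IsGreedy F S) {T : Fin k → Finset α} (hT : ∀ j, T j ∈ F) :
    (1 - (1 - 1 / (k : ℝ)) ^ k) * #(univ.biUnion T) ≤ #(univ.biUnion S) := by
  rcases Nat.eq_zero_or_pos k with rfl | hk
  · simp
  have hr : (0 : ℝ) ≤ 1 - 1 / k := by
    rw [sub_nonneg, div_le_one (by exact_mod_cast hk)]
    exact_mod_cast hk
  have hdeficit := le_geom (u := fun n => (#(univ.biUnion T) : ℝ) - #(coveredBy S n)) hr k
    fun n hn => hS.deficit_succ_le hT hn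
  simp only [coveredBy_self, coveredBy_zero, card_empty, Nat.cast_zero, sub_zero] at hdeficit
  linarith

end MaxCoverage

open MaxCoverage in
theorem greedy_max_coverage_general {α : Type*} [DecidableEq α]
    (F : Finset (Finset α)) (k : ℕ) (hk : 1 ≤ k)
    (S : Fin k → Finset α)
    (hgreedy : ∀ j : Fin k, ∀ T ∈ F,
      (T \ ((Finset.univ.filter fun i : Fin k => i < j).biUnion S)).card ≤
      (S j \ ((Finset.univ.filter fun i : Fin k => i < j).biUnion S)).card) :
    (∀ T : Fin k → Finset α, (∀ j, T j ∈ F) →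
      (1 - (1 - 1 / (k : ℝ)) ^ k) * ((Finset.univ.biUnion T).card : ℝ) ≤
        ((Finset.univ.biUnion S).card : ℝ)) ∧
    1 - 1 / Real.exp 1 ≤ 1 - (1 - 1 / (k : ℝ)) ^ k := by
  have hS : IsGreedy F S := fun j T hT => by
    simpa only [coveredBy_val] using hgreedy j T hT
  refine ⟨fun T hT => hS.approx hT, ?_⟩
  have hexp := Real.one_sub_div_pow_le_exp_neg (n := k) (t := 1) (by exact_mod_cast hk)
  rw [Real.exp_neg, ← one_div] at hexp
  linarith

/-- Greedy approximation for maximum coverage: if at each of `k` steps one picks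
a set from the family `F` covering the most yet-uncovered elements, then the
number of covered elements is at least `(1 - (1 - 1/k)^k)` times the optimum,
and `1 - (1 - 1/k)^k ≥ 1 - 1/e`. -/
theorem greedy_max_coverage {α : Type*} [DecidableEq α]
    (F : Finset (Finset α)) (k : ℕ) (hk : 1 ≤ k)
    (S : Fin k → Finset α) (hS : ∀ j, S j ∈ F)
    (hgreedy : ∀ j : Fin k, ∀ T ∈ F,
      (T \ ((Finset.univ.filter fun i : Fin k => i < j).biUnion S)).card ≤
      (S j \ ((Finset.univ.filter fun i : Fin k => i < j).biUnion S)).card) :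
    (∀ T : Fin k → Finset α, (∀ j, T j ∈ F) →
      (1 - (1 - 1 / (k : ℝ)) ^ k) * ((Finset.univ.biUnion T).card : ℝ) ≤
        ((Finset.univ.biUnion S).card : ℝ)) ∧
    1 - 1 / Real.exp 1 ≤ 1 - (1 - 1 / (k : ℝ)) ^ k :=
  greedy_max_coverage_general F k hk S hgreedy
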